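/- arXiv:2410.11832 — 2 statements merged into one kernel-verified Lean document; each statement's English description precedes it below -/
import Mathlib

section
/- Let $\theta_0, \theta_1 > 0$ be real numbers with $\theta_0 < k\theta_1$ for a fixed integer $k \ge 1$, and let $\beta$ be a real number with $|\beta| \le 1/2$. Then for all $P \ge 1$, $\int_{1}^{P} \frac{y^{\theta_0 - 1}}{(1 + y^k|\beta|)^{\theta_1}}\,dy \ll \frac{P^{\theta_0}}{(1 + P^k|\beta|)^{\theta_0/k}}$, with implicit constant depending only on $k, \theta_0, \theta_1$. -/
open MeasureTheory

/-- Lemma 5.2(ii): for `θ₀ < k θ₁`, `∫_1^P y^{θ₀-1}/(1+y^k|β|)^{θ₁} dy ≪ P^{θ₀}/(1+P^k|β|)^{θ₀/k}`. -/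
theorem stmt1 (k : ℕ) (hk : 1 ≤ k) (θ₀ θ₁ : ℝ)
    (hθ₀ : 0 < θ₀) (hθ₁ : 0 < θ₁) (hlt : θ₀ < k * θ₁) :
    ∃ C > 0, ∀ P : ℝ, 1 ≤ P → ∀ β : ℝ, |β| ≤ 1 / 2 →
      |∫ y in (1:ℝ)..P, y ^ (θ₀ - 1) / (1 + y ^ k * |β|) ^ θ₁| ≤
        C * (P ^ θ₀ / (1 + P ^ k * |β|) ^ (θ₀ / k)) := by
  have hk0 : (0:ℝ) < (k:ℝ) := by exact_mod_cast hk
  have hkne : (k:ℝ) ≠ 0 := ne_of_gt hk0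
  have hS : (0:ℝ) < 1 / θ₀ + 1 / ((k:ℝ) * θ₁ - θ₀) := by
    have h1 : (0:ℝ) < 1 / θ₀ := by positivity
    have h2 : (0:ℝ) < 1 / ((k:ℝ) * θ₁ - θ₀) := one_div_pos.mpr (by linarith)
    linarith
  refine ⟨(2:ℝ) ^ (θ₀ / k) * (1 / θ₀ + 1 / ((k:ℝ) * θ₁ - θ₀)), by positivity, ?_⟩
  intro P hP β hβ
  set b := |β| with hbdef
  have hb0 : 0 ≤ b := abs_nonneg β
  have hP0 : (0:ℝ) < P := lt_of_lt_of_le one_pos hP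
  have hbase : ∀ y : ℝ, 0 ≤ y → (0:ℝ) < 1 + y ^ k * b := by
    intro y hy
    have : 0 ≤ y ^ k * b := mul_nonneg (pow_nonneg hy k) hb0
    linarith
  have hint : ∀ a c : ℝ, 1 ≤ a → 1 ≤ c →
      IntervalIntegrable (fun y => y ^ (θ₀ - 1) / (1 + y ^ k * b) ^ θ₁) volume a c := by
    intro a c ha hc
    apply ContinuousOn.intervalIntegrable
    have hpos : ∀ y ∈ Set.uIcc a c, (0:ℝ) < y := by
      intro y hy
      have h1 : (1:ℝ) ≤ a ⊓ c := le_inf ha hc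
      exact lt_of_lt_of_le one_pos (le_trans h1 hy.1)
    apply ContinuousOn.div
    · exact continuousOn_id.rpow_const (fun y hy => Or.inl (ne_of_gt (hpos y hy)))
    · exact (continuousOn_const.add ((continuousOn_id.pow k).mul continuousOn_const)).rpow_const
        (fun y hy => Or.inr hθ₁.le)
    · intro y hy
      exact ne_of_gt (Real.rpow_pos_of_pos (hbase y (hpos y hy).le) θ₁)
  have hint2 : ∀ (s : ℝ) (a c : ℝ), 1 ≤ a → 1 ≤ c →
      IntervalIntegrable (fun y : ℝ => y ^ s) volume a c := by
    intro s a c ha hc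
    apply ContinuousOn.intervalIntegrable
    have hpos : ∀ y ∈ Set.uIcc a c, (0:ℝ) < y := by
      intro y hy
      have h1 : (1:ℝ) ≤ a ⊓ c := le_inf ha hc
      exact lt_of_lt_of_le one_pos (le_trans h1 hy.1)
    exact continuousOn_id.rpow_const (fun y hy => Or.inl (ne_of_gt (hpos y hy)))
  have hnn : 0 ≤ ∫ y in (1:ℝ)..P, y ^ (θ₀ - 1) / (1 + y ^ k * b) ^ θ₁ := by
    apply intervalIntegral.integral_nonneg hP
    intro y hy
    have hy0 : (0:ℝ) ≤ y := le_trans zero_le_one hy.1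
    exact div_nonneg (Real.rpow_nonneg hy0 _) (Real.rpow_nonneg (hbase y hy0).le _)
  rw [abs_of_nonneg hnn]
  -- head bound: ∫_a^c f ≤ c^θ₀/θ₀
  have head : ∀ a c : ℝ, 1 ≤ a → a ≤ c →
      (∫ y in a..c, y ^ (θ₀ - 1) / (1 + y ^ k * b) ^ θ₁) ≤ c ^ θ₀ / θ₀ := by
    intro a c ha hac
    have hc : (1:ℝ) ≤ c := le_trans ha hac
    have step1 : (∫ y in a..c, y ^ (θ₀ - 1) / (1 + y ^ k * b) ^ θ₁) ≤
        ∫ y in a..c, y ^ (θ₀ - 1) := by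
      apply intervalIntegral.integral_mono_on hac (hint a c ha hc) (hint2 _ a c ha hc)
      intro y hy
      have hy1 : (1:ℝ) ≤ y := le_trans ha hy.1
      have hy0 : (0:ℝ) ≤ y := le_trans zero_le_one hy1
      have hden : (1:ℝ) ≤ (1 + y ^ k * b) ^ θ₁ := by
        apply Real.one_le_rpow _ hθ₁.le
        have : 0 ≤ y ^ k * b := mul_nonneg (pow_nonneg hy0 k) hb0
        linarith
      exact div_le_self (Real.rpow_nonneg hy0 _) hden
    have step2 : (∫ y in a..c, (y:ℝ) ^ (θ₀ - 1)) = (c ^ θ₀ - a ^ θ₀) / θ₀ := by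
      rw [integral_rpow (Or.inl (by linarith))]
      norm_num
    have ha0 : (1:ℝ) ≤ a ^ θ₀ := Real.one_le_rpow ha hθ₀.le
    have hc0 : (0:ℝ) ≤ c ^ θ₀ := Real.rpow_nonneg (by linarith) _
    calc (∫ y in a..c, y ^ (θ₀ - 1) / (1 + y ^ k * b) ^ θ₁)
        ≤ (c ^ θ₀ - a ^ θ₀) / θ₀ := step1.trans (le_of_eq step2)
      _ ≤ c ^ θ₀ / θ₀ := by gcongr <;> linarith
  by_cases hcase : P ^ k * b ≤ 1
  · -- small case: 1 + P^k b ≤ 2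
    have hrhs : (1 + P ^ k * b) ^ (θ₀ / k) ≤ (2:ℝ) ^ (θ₀ / k) :=
      Real.rpow_le_rpow (hbase P hP0.le).le (by linarith) (by positivity)
    have hPθ : (0:ℝ) < P ^ θ₀ := Real.rpow_pos_of_pos hP0 θ₀
    have hD : (0:ℝ) < (1 + P ^ k * b) ^ (θ₀ / k) := Real.rpow_pos_of_pos (hbase P hP0.le) _
    refine (head 1 P le_rfl hP).trans ?_
    rw [← mul_div_assoc, le_div_iff₀ hD]
    have h1f : (0:ℝ) < 1 / ((k:ℝ) * θ₁ - θ₀) := one_div_pos.mpr (by linarith)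
    calc P ^ θ₀ / θ₀ * (1 + P ^ k * b) ^ (θ₀ / k)
        ≤ P ^ θ₀ / θ₀ * (2:ℝ) ^ (θ₀ / k) := by
          apply mul_le_mul_of_nonneg_left hrhs (by positivity)
      _ = ((2:ℝ) ^ (θ₀ / k) * (1 / θ₀)) * P ^ θ₀ := by ring
      _ ≤ (2:ℝ) ^ (θ₀ / k) * (1 / θ₀ + 1 / ((k:ℝ) * θ₁ - θ₀)) * P ^ θ₀ := by
          apply mul_le_mul_of_nonneg_right _ hPθ.le
          apply mul_le_mul_of_nonneg_left _ (by positivity)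
          linarith
  · -- large case: P^k b > 1
    push_neg at hcase
    have hbpos : 0 < b := by
      rcases lt_or_eq_of_le hb0 with h | h
      · exact h
      · exfalso; rw [← h] at hcase; simp at hcase; linarith
    have hblt1 : b < 1 := lt_of_le_of_lt hβ (by norm_num)
    set Y : ℝ := b ^ (-(1 / (k:ℝ))) with hYdef
    have hY1 : 1 < Y := by
      rw [hYdef, Real.one_lt_rpow_iff_of_pos hbpos]
      exact Or.inr ⟨hblt1, by rw [neg_lt, neg_zero]; positivity⟩
    have hY0 : 0 < Y := lt_trans one_pos hY1
    have hYk : Y ^ k = b⁻¹ := by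
      rw [hYdef, ← Real.rpow_natCast (b ^ (-(1 / (k:ℝ)))) k, ← Real.rpow_mul hb0,
        show -(1 / (k:ℝ)) * (k:ℝ) = -1 by field_simp]
      exact Real.rpow_neg_one b
    have hYP : Y ≤ P := by
      have h1 : Y ^ k ≤ P ^ k := by
        rw [hYk, inv_le_iff_one_le_mul₀ hbpos]
        linarith [hcase.le]
      exact (pow_le_pow_iff_left₀ hY0.le hP0.le (by omega)).mp h1
    have hsplit : (∫ y in (1:ℝ)..P, y ^ (θ₀ - 1) / (1 + y ^ k * b) ^ θ₁)
        = (∫ y in (1:ℝ)..Y, y ^ (θ₀ - 1) / (1 + y ^ k * b) ^ θ₁)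
          + ∫ y in Y..P, y ^ (θ₀ - 1) / (1 + y ^ k * b) ^ θ₁ :=
      (intervalIntegral.integral_add_adjacent_intervals
        (hint 1 Y le_rfl hY1.le) (hint Y P hY1.le hP)).symm
    -- tail bound
    have tail : (∫ y in Y..P, y ^ (θ₀ - 1) / (1 + y ^ k * b) ^ θ₁)
        ≤ b ^ (-θ₁) * (Y ^ (θ₀ - (k:ℝ) * θ₁) / ((k:ℝ) * θ₁ - θ₀)) := by
      have step1 : (∫ y in Y..P, y ^ (θ₀ - 1) / (1 + y ^ k * b) ^ θ₁)
          ≤ ∫ y in Y..P, b ^ (-θ₁) * y ^ (θ₀ - 1 - (k:ℝ) * θ₁) := by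
        have hintc : IntervalIntegrable (fun y : ℝ => b ^ (-θ₁) * y ^ (θ₀ - 1 - (k:ℝ) * θ₁))
            volume Y P := (hint2 (θ₀ - 1 - (k:ℝ) * θ₁) Y P hY1.le hP).const_mul _
        apply intervalIntegral.integral_mono_on hYP (hint Y P hY1.le hP) hintc
        intro y hy
        have hy1 : (1:ℝ) ≤ y := le_trans hY1.le hy.1
        have hy0 : (0:ℝ) < y := lt_of_lt_of_le one_pos hy1
        have hykb : (0:ℝ) < y ^ k * b := mul_pos (pow_pos hy0 k) hbpos
        have hd1 : (y ^ k * b) ^ θ₁ ≤ (1 + y ^ k * b) ^ θ₁ :=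
          Real.rpow_le_rpow hykb.le (by linarith) hθ₁.le
        have hd0 : (0:ℝ) < (y ^ k * b) ^ θ₁ := Real.rpow_pos_of_pos hykb θ₁
        have h2 : y ^ (θ₀ - 1) / (1 + y ^ k * b) ^ θ₁ ≤ y ^ (θ₀ - 1) / (y ^ k * b) ^ θ₁ := by
          gcongr
        refine h2.trans (le_of_eq ?_)
        rw [Real.mul_rpow (pow_nonneg hy0.le k) hb0,
          ← Real.rpow_natCast y k, ← Real.rpow_mul hy0.le,
          div_eq_mul_inv, mul_inv, ← Real.rpow_neg hy0.le, ← Real.rpow_neg hb0,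
          ← mul_assoc, ← Real.rpow_add hy0,
          show θ₀ - 1 + -((k:ℝ) * θ₁) = θ₀ - 1 - (k:ℝ) * θ₁ by ring]
        ring
      have step2 : (∫ y in Y..P, b ^ (-θ₁) * y ^ (θ₀ - 1 - (k:ℝ) * θ₁))
          = b ^ (-θ₁) * ((P ^ (θ₀ - (k:ℝ) * θ₁) - Y ^ (θ₀ - (k:ℝ) * θ₁)) / (θ₀ - (k:ℝ) * θ₁)) := by
        rw [intervalIntegral.integral_const_mul]
        congr 1
        have h0 : (0:ℝ) ∉ Set.uIcc Y P := by
          intro h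
          rcases Set.mem_uIcc.mp h with ⟨h1, _⟩ | ⟨h1, _⟩ <;> linarith
        have hne : θ₀ - 1 - (k:ℝ) * θ₁ ≠ -1 := by intro h; apply absurd hlt; push_neg; nlinarith [h]
        rw [integral_rpow (Or.inr ⟨hne, h0⟩),
          show θ₀ - 1 - (k:ℝ) * θ₁ + 1 = θ₀ - (k:ℝ) * θ₁ by ring]
      refine step1.trans (le_of_eq step2 |>.trans ?_)
      apply mul_le_mul_of_nonneg_left _ (Real.rpow_nonneg hb0 _)
      have hPe : (0:ℝ) ≤ P ^ (θ₀ - (k:ℝ) * θ₁) := Real.rpow_nonneg hP0.le _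
      have key : (P ^ (θ₀ - (k:ℝ) * θ₁) - Y ^ (θ₀ - (k:ℝ) * θ₁)) / (θ₀ - (k:ℝ) * θ₁)
          = (Y ^ (θ₀ - (k:ℝ) * θ₁) - P ^ (θ₀ - (k:ℝ) * θ₁)) / ((k:ℝ) * θ₁ - θ₀) := by
        rw [← neg_div_neg_eq]; ring_nf
      rw [key]
      gcongr
      · linarith
    -- head bound applied
    have headY := head 1 Y le_rfl hY1.le
    -- rpow algebra
    have hYθ : Y ^ θ₀ = b ^ (-(θ₀ / (k:ℝ))) := by
      rw [hYdef, ← Real.rpow_mul hb0]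
      congr 1
      field_simp
    have hbY : b ^ (-θ₁) * Y ^ (θ₀ - (k:ℝ) * θ₁) = b ^ (-(θ₀ / (k:ℝ))) := by
      rw [hYdef, ← Real.rpow_mul hb0, ← Real.rpow_add hbpos]
      congr 1
      field_simp
      ring
    have hLHS : (∫ y in (1:ℝ)..P, y ^ (θ₀ - 1) / (1 + y ^ k * b) ^ θ₁)
        ≤ b ^ (-(θ₀ / (k:ℝ))) * (1 / θ₀ + 1 / ((k:ℝ) * θ₁ - θ₀)) := by
      rw [hsplit]
      calc (∫ y in (1:ℝ)..Y, y ^ (θ₀ - 1) / (1 + y ^ k * b) ^ θ₁)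
          + ∫ y in Y..P, y ^ (θ₀ - 1) / (1 + y ^ k * b) ^ θ₁
          ≤ Y ^ θ₀ / θ₀ + b ^ (-θ₁) * (Y ^ (θ₀ - (k:ℝ) * θ₁) / ((k:ℝ) * θ₁ - θ₀)) :=
            add_le_add headY tail
        _ = b ^ (-(θ₀ / (k:ℝ))) * (1 / θ₀ + 1 / ((k:ℝ) * θ₁ - θ₀)) := by
            rw [hYθ, ← mul_div_assoc, hbY]; ring
    refine hLHS.trans ?_
    -- final comparison
    have hD : (0:ℝ) < (1 + P ^ k * b) ^ (θ₀ / k) := Real.rpow_pos_of_pos (hbase P hP0.le) _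
    have hPθ : (0:ℝ) < P ^ θ₀ := Real.rpow_pos_of_pos hP0 θ₀
    have hDle : (1 + P ^ k * b) ^ (θ₀ / k) ≤ (2:ℝ) ^ (θ₀ / k) * P ^ θ₀ * b ^ (θ₀ / (k:ℝ)) := by
      have h1 : (1 + P ^ k * b) ≤ 2 * (P ^ k * b) := by linarith
      have h2 : (1 + P ^ k * b) ^ (θ₀ / k) ≤ (2 * (P ^ k * b)) ^ (θ₀ / k) :=
        Real.rpow_le_rpow (hbase P hP0.le).le h1 (by positivity)
      refine h2.trans (le_of_eq ?_)
      rw [Real.mul_rpow (by norm_num) (mul_pos (pow_pos hP0 k) hbpos).le,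
        Real.mul_rpow (pow_pos hP0 k).le hb0,
        ← Real.rpow_natCast P k, ← Real.rpow_mul hP0.le,
        show (k:ℝ) * (θ₀ / k) = θ₀ by field_simp, ← mul_assoc]
    have hbinv : b ^ (-(θ₀ / (k:ℝ))) * b ^ (θ₀ / (k:ℝ)) = 1 := by
      rw [← Real.rpow_add hbpos]; norm_num
    rw [← mul_div_assoc, le_div_iff₀ hD]
    calc b ^ (-(θ₀ / (k:ℝ))) * (1 / θ₀ + 1 / ((k:ℝ) * θ₁ - θ₀)) * (1 + P ^ k * b) ^ (θ₀ / k)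
        ≤ b ^ (-(θ₀ / (k:ℝ))) * (1 / θ₀ + 1 / ((k:ℝ) * θ₁ - θ₀))
            * ((2:ℝ) ^ (θ₀ / k) * P ^ θ₀ * b ^ (θ₀ / (k:ℝ))) := by
          apply mul_le_mul_of_nonneg_left hDle
          positivity
      _ = (b ^ (-(θ₀ / (k:ℝ))) * b ^ (θ₀ / (k:ℝ)))
            * ((1 / θ₀ + 1 / ((k:ℝ) * θ₁ - θ₀)) * ((2:ℝ) ^ (θ₀ / k) * P ^ θ₀)) := by ring
      _ = (2:ℝ) ^ (θ₀ / k) * (1 / θ₀ + 1 / ((k:ℝ) * θ₁ - θ₀)) * P ^ θ₀ := by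
          rw [hbinv]; ring
end

section
/- Let $r > 1$ be real, $P \ge 2$, and $1 \le Q_0 < Q_1 \le P^{k/2}$ for a fixed integer $k \ge 2$. Define $\Upsilon : [0,1) \to \mathbb{R}$ by $\Upsilon(\alpha) = q^{-2}(1 + P^k|\alpha - a/q|)^{-1}$ if $\alpha$ lies in the major arc $\mathfrak{M}_{a,q}(\tfrac{1}{2}P^{k/2}, P) = \{\alpha \in [0,1) : |q\alpha - a| \le \tfrac{1}{2}P^{k/2} P^{-k}\}$ for some coprime integers $0 \le a \le q \le \tfrac{1}{2}P^{k/2}$, and $\Upsilon(\alpha) = 0$ otherwise. Let $\mathfrak{M}(Q) = \bigcup_{q \le Q} \bigcup_{0 \le a \le q, (a,q)=1} \{\alpha \in [0,1) : |q\alpha - a| \le Q P^{-k}\}$. Then $\int_{\mathfrak{M}(Q_1) \setminus \mathfrak{M}(Q_0)} \Upsilon(\alpha)^r\,d\alpha \ll P^{-k} Q_0^{1-r}$, with implicit constant depending only on $r$. -/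
open MeasureTheory
open Set

namespace Stmt2Aux

lemma integrable_g {r K : ℝ} (hr : 1 < r) (hK : 0 < K) :
    Integrable (fun x : ℝ => (1 + K * |x|) ^ (-r)) := by
  have h1 : Integrable (fun x : ℝ => (1 + ‖x‖) ^ (-r)) :=
    integrable_one_add_norm (by simpa using hr)
  have h2 := h1.comp_mul_left' (ne_of_gt hK)
  simpa [Real.norm_eq_abs, abs_mul, abs_of_pos hK] using h2

lemma tail_Ioi {r K : ℝ} (hr : 1 < r) (hK : 0 < K) {T : ℝ} (hT : 0 < T) :
    ∫ x in Ioi T, (1 + K * |x|) ^ (-r) ≤ K ^ (-r) * (T ^ (1 - r) / (r - 1)) := by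
  have hint : IntegrableOn (fun x : ℝ => K ^ (-r) * x ^ (-r)) (Ioi T) :=
    (integrableOn_Ioi_rpow_of_lt (by linarith) hT).const_mul _
  have hmono : ∫ x in Ioi T, (1 + K * |x|) ^ (-r) ≤ ∫ x in Ioi T, K ^ (-r) * x ^ (-r) := by
    apply setIntegral_mono_on ((integrable_g hr hK).integrableOn) hint measurableSet_Ioi
    intro x hx
    simp only [mem_Ioi] at hx
    have hx0 : 0 < x := hT.trans hx
    rw [← Real.mul_rpow (le_of_lt hK) (le_of_lt hx0), abs_of_pos hx0]
    exact Real.rpow_le_rpow_of_nonpos (by positivity) (by linarith) (by linarith)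
  have hval : ∫ x in Ioi T, K ^ (-r) * x ^ (-r) = K ^ (-r) * (-T ^ (-r + 1) / (-r + 1)) := by
    rw [MeasureTheory.integral_const_mul, integral_Ioi_rpow_of_lt (by linarith) hT]
  have he : -T ^ (-r + 1) / (-r + 1) = T ^ (1 - r) / (r - 1) := by
    rw [show -r + 1 = 1 - r by ring, div_eq_div_iff (by linarith) (by linarith)]
    ring
  calc ∫ x in Ioi T, (1 + K * |x|) ^ (-r) ≤ ∫ x in Ioi T, K ^ (-r) * x ^ (-r) := hmono
    _ = K ^ (-r) * (T ^ (1 - r) / (r - 1)) := by rw [hval, he]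

lemma tail {r K : ℝ} (hr : 1 < r) (hK : 0 < K) {T : ℝ} (hT : 0 < T) :
    ∫ x in {x : ℝ | T ≤ |x|}, (1 + K * |x|) ^ (-r)
      ≤ 2 * (K ^ (-r) * (T ^ (1 - r) / (r - 1))) := by
  have hset : {x : ℝ | T ≤ |x|} = Iic (-T) ∪ Ici T := by
    ext x
    simp only [mem_setOf_eq, le_abs, mem_union, mem_Iic, mem_Ici, le_neg]
    tauto
  have hIic : ∫ x in Iic (-T), (1 + K * |x|) ^ (-r) = ∫ x in Ioi T, (1 + K * |x|) ^ (-r) := by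
    have h := integral_comp_neg_Iic (-T) (fun x : ℝ => (1 + K * |x|) ^ (-r))
    simp only [abs_neg, neg_neg] at h
    exact h
  have hIci : ∫ x in Ici T, (1 + K * |x|) ^ (-r) = ∫ x in Ioi T, (1 + K * |x|) ^ (-r) :=
    integral_Ici_eq_integral_Ioi
  rw [hset, setIntegral_union (by rw [Iic_disjoint_Ici]; intro h; linarith) measurableSet_Ici
    ((integrable_g hr hK).integrableOn) ((integrable_g hr hK).integrableOn), hIic, hIci]
  have := tail_Ioi hr hK hT
  linarith

lemma full {r K : ℝ} (hr : 1 < r) (hK : 0 < K) :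
    ∫ x : ℝ, (1 + K * |x|) ^ (-r) ≤ 2 * r / (K * (r - 1)) := by
  have habs : ∫ x : ℝ, (1 + K * |x|) ^ (-r) = 2 * ∫ x in Ioi (0:ℝ), (1 + K * x) ^ (-r) :=
    integral_comp_abs (f := fun x => (1 + K * x) ^ (-r))
  have hcongr : ∀ s : Set ℝ, s ⊆ Ioi 0 → MeasurableSet s →
      ∫ x in s, (1 + K * x) ^ (-r) = ∫ x in s, (1 + K * |x|) ^ (-r) := fun s hs hms =>
    setIntegral_congr_fun hms (fun x hx => by rw [abs_of_pos (hs hx)])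
  have hsplit : Ioc (0:ℝ) K⁻¹ ∪ Ioi K⁻¹ = Ioi 0 := Ioc_union_Ioi_eq_Ioi (by positivity)
  have hints : IntegrableOn (fun x : ℝ => (1 + K * x) ^ (-r)) (Ioc (0:ℝ) K⁻¹) :=
    ((integrable_g hr hK).integrableOn).congr_fun
      (fun x hx => by dsimp only; rw [abs_of_pos hx.1]) measurableSet_Ioc
  have hinti : IntegrableOn (fun x : ℝ => (1 + K * x) ^ (-r)) (Ioi K⁻¹) :=
    ((integrable_g hr hK).integrableOn).congr_fun
      (fun x hx => by dsimp only; rw [abs_of_pos (lt_trans (by positivity) hx)]) measurableSet_Ioi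
  have h1 : ∫ x in Ioc (0:ℝ) K⁻¹, (1 + K * x) ^ (-r) ≤ K⁻¹ := by
    have hle : ∫ x in Ioc (0:ℝ) K⁻¹, (1 + K * x) ^ (-r) ≤ ∫ _x in Ioc (0:ℝ) K⁻¹, (1:ℝ) := by
      apply setIntegral_mono_on hints
        (integrableOn_const measure_Ioc_lt_top.ne)
        measurableSet_Ioc
      intro x hx
      apply Real.rpow_le_one_of_one_le_of_nonpos
      · nlinarith [hx.1, hK]
      · linarith
    have heq : ∫ _x in Ioc (0:ℝ) K⁻¹, (1:ℝ) = K⁻¹ := by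
      simp [Real.volume_Ioc, ENNReal.toReal_ofReal, inv_nonneg.mpr (le_of_lt hK)]
    linarith
  have h2 : ∫ x in Ioi K⁻¹, (1 + K * x) ^ (-r) ≤ K⁻¹ / (r - 1) := by
    have ht := tail_Ioi hr hK (T := K⁻¹) (by positivity)
    have he : K ^ (-r) * ((K⁻¹) ^ (1 - r) / (r - 1)) = K⁻¹ / (r - 1) := by
      rw [Real.inv_rpow (le_of_lt hK), ← Real.rpow_neg (le_of_lt hK), div_eq_mul_inv,
        ← mul_assoc, ← Real.rpow_add hK, show -r + -(1 - r) = -1 by ring, Real.rpow_neg_one,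
        ← div_eq_mul_inv]
    rw [hcongr _ (Ioi_subset_Ioi (by positivity)) measurableSet_Ioi]
    rw [← he]; exact ht
  have hadd : ∫ x in Ioi (0:ℝ), (1 + K * x) ^ (-r)
      = (∫ x in Ioc (0:ℝ) K⁻¹, (1 + K * x) ^ (-r)) + ∫ x in Ioi K⁻¹, (1 + K * x) ^ (-r) := by
    rw [← hsplit, setIntegral_union (Ioc_disjoint_Ioi le_rfl) measurableSet_Ioi hints hinti]
  have hfin : 2 * (K⁻¹ + K⁻¹ / (r - 1)) = 2 * r / (K * (r - 1)) := by
    have h3 : r - 1 ≠ 0 := by intro h; nlinarith [sub_eq_zero.mp h]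
    have h4 : K ≠ 0 := ne_of_gt hK
    field_simp
    ring
  rw [habs, hadd, ← hfin]
  nlinarith [h1, h2]

lemma step_ineq {r : ℝ} (hr : 1 < r) {a : ℝ} (ha : 1 ≤ a) :
    (a + 1) ^ (-r) ≤ (a ^ (1 - r) - (a + 1) ^ (1 - r)) / (r - 1) := by
  have h0 : (0:ℝ) < a := by linarith
  have hnot : (0:ℝ) ∉ Set.uIcc a (a + 1) := by
    rw [Set.uIcc_of_le (by linarith)]
    intro h
    have := h.1
    linarith
  have hint : ∫ t in a..(a + 1), t ^ (-r)
      = ((a + 1) ^ (-r + 1) - a ^ (-r + 1)) / (-r + 1) :=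
    integral_rpow (Or.inr ⟨by intro h; have h1 : r = 1 := neg_injective h; simp [h1] at hr, hnot⟩)
  have hii : IntervalIntegrable (fun t : ℝ => t ^ (-r)) volume a (a + 1) :=
    intervalIntegral.intervalIntegrable_rpow (Or.inr hnot)
  have hmono : ∫ _t in a..(a + 1), ((a + 1):ℝ) ^ (-r) ≤ ∫ t in a..(a + 1), t ^ (-r) := by
    apply intervalIntegral.integral_mono_on (by linarith) intervalIntegrable_const hii
    intro t ht
    exact Real.rpow_le_rpow_of_nonpos (lt_of_lt_of_le h0 ht.1) ht.2 (by linarith)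
  rw [intervalIntegral.integral_const] at hmono
  simp only [add_sub_cancel_left, smul_eq_mul, one_mul] at hmono
  rw [hint] at hmono
  have he : ((a + 1) ^ (-r + 1) - a ^ (-r + 1)) / (-r + 1)
      = (a ^ (1 - r) - (a + 1) ^ (1 - r)) / (r - 1) := by
    rw [show -r + 1 = 1 - r by ring, div_eq_div_iff (by linarith) (by linarith)]
    ring
  rw [he] at hmono
  exact hmono

lemma sum_rpow {r : ℝ} (hr : 1 < r) (N : ℕ) :
    ∑ q ∈ Finset.Icc 1 N, (q:ℝ) ^ (-r) ≤ r / (r - 1) := by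
  have key : ∀ M : ℕ, 1 ≤ M →
      ∑ q ∈ Finset.Icc 1 M, (q:ℝ) ^ (-r) ≤ r / (r - 1) - (M:ℝ) ^ (1 - r) / (r - 1) := by
    intro M
    induction M with
    | zero => intro h; exact absurd h (by norm_num)
    | succ n ih =>
      intro _
      rcases Nat.eq_zero_or_pos n with h0 | h1
      · subst h0
        have h2 : r - 1 ≠ 0 := by intro h; nlinarith [sub_eq_zero.mp h]
        have h3 : r / (r - 1) - 1 / (r - 1) = 1 := by field_simp
        norm_num [Real.one_rpow]
        rw [inv_eq_one_div]
        linarith [h3]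
      · rw [Finset.sum_Icc_succ_top (by omega)]
        have hstep := step_ineq hr (a := (n:ℝ)) (by exact_mod_cast h1)
        have hcast : ((n + 1 : ℕ) : ℝ) = (n:ℝ) + 1 := by push_cast; ring
        calc ∑ q ∈ Finset.Icc 1 n, (q:ℝ) ^ (-r) + ((n + 1 : ℕ) : ℝ) ^ (-r)
            ≤ (r / (r - 1) - (n:ℝ) ^ (1 - r) / (r - 1))
              + ((n:ℝ) ^ (1 - r) - ((n:ℝ) + 1) ^ (1 - r)) / (r - 1) := by
              rw [hcast]; exact add_le_add (ih h1) hstep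
          _ = r / (r - 1) - ((n:ℝ) + 1) ^ (1 - r) / (r - 1) := by ring
          _ = r / (r - 1) - ((n + 1 : ℕ) : ℝ) ^ (1 - r) / (r - 1) := by rw [hcast]
  rcases Nat.eq_zero_or_pos N with h0 | h1
  · subst h0
    simp only [show Finset.Icc 1 0 = ∅ from rfl, Finset.sum_empty]
    have h2 : 0 < r - 1 := by linarith
    positivity
  · have := key N h1
    have h2 : 0 < r - 1 := by linarith
    have hpos : 0 ≤ (N:ℝ) ^ (1 - r) / (r - 1) :=
      div_nonneg (Real.rpow_nonneg (Nat.cast_nonneg N) _) (le_of_lt h2)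
    linarith


variable {r K T c : ℝ}

/-- The model function on a major arc, centered: indicator of `{T ≤ |x|}` times
`c * (1+K|x|)^(-r)`. -/
noncomputable def arcFn (r K T c : ℝ) (x : ℝ) : ℝ :=
  Set.indicator {x : ℝ | T ≤ |x|} (fun x => c * (1 + K * |x|) ^ (-r)) x

lemma arcFn_nonneg (hK : 0 ≤ K) (hc : 0 ≤ c) (x : ℝ) : 0 ≤ arcFn r K T c x :=
  Set.indicator_nonneg (fun y _ => mul_nonneg hc (Real.rpow_nonneg (by positivity) _)) x

lemma measurableSet_absSet (T : ℝ) : MeasurableSet {x : ℝ | T ≤ |x|} :=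
  measurableSet_le measurable_const continuous_abs.measurable

lemma arcFn_integrable (hr : 1 < r) (hK : 0 < K) : Integrable (arcFn r K T c) :=
  (((integrable_g hr hK).const_mul c).indicator (measurableSet_absSet T))

lemma arcFn_apply_of_mem {x : ℝ} (h : T ≤ |x|) :
    arcFn r K T c x = c * (1 + K * |x|) ^ (-r) :=
  Set.indicator_of_mem (show x ∈ {x : ℝ | T ≤ |x|} from h) _

lemma arcFn_integral_tail (hr : 1 < r) (hK : 0 < K) (hT : 0 < T) (hc : 0 ≤ c) :
    ∫ x, arcFn r K T c x ≤ c * (2 * (K ^ (-r) * (T ^ (1 - r) / (r - 1)))) := by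
  unfold arcFn
  rw [integral_indicator (measurableSet_absSet T), MeasureTheory.integral_const_mul]
  exact mul_le_mul_of_nonneg_left (tail hr hK hT) hc

lemma arcFn_integral_full (hr : 1 < r) (hK : 0 < K) (hc : 0 ≤ c) :
    ∫ x, arcFn r K T c x ≤ c * (2 * r / (K * (r - 1))) := by
  have h1 : ∫ x, arcFn r K T c x ≤ ∫ x : ℝ, c * (1 + K * |x|) ^ (-r) := by
    refine integral_mono_of_nonneg (ae_of_all _ (arcFn_nonneg (le_of_lt hK) hc))
      ((integrable_g hr hK).const_mul c) (ae_of_all _ ?_)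
    exact Set.indicator_le_self' (fun x _ => mul_nonneg hc (Real.rpow_nonneg (by positivity) _))
  rw [MeasureTheory.integral_const_mul] at h1
  exact h1.trans (mul_le_mul_of_nonneg_left (full hr hK) hc)

lemma arc_bound {r K Q₀ : ℝ} (hr : 1 < r) (hK : 0 < K) (hQ₀ : 1 ≤ Q₀) {q : ℕ} (hq : 1 ≤ q) :
    ∫ x, arcFn r K (if (q:ℝ) ≤ Q₀ then Q₀ / (q * K) else 0) ((q:ℝ) ^ (-(2*r))) x
      ≤ 2 * r / (r - 1) * K⁻¹ * Q₀ ^ (1 - r) * (q:ℝ) ^ (-(r+1)) := by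
  have hq0 : (0:ℝ) < q := by exact_mod_cast hq
  have hQ₀0 : (0:ℝ) < Q₀ := by linarith
  have hc : (0:ℝ) ≤ (q:ℝ) ^ (-(2*r)) := Real.rpow_nonneg (le_of_lt hq0) _
  by_cases hcase : (q:ℝ) ≤ Q₀
  · rw [if_pos hcase]
    have hT : 0 < Q₀ / ((q:ℝ) * K) := by positivity
    refine (arcFn_integral_tail hr hK hT hc).trans ?_
    have e1 : (Q₀ / ((q:ℝ) * K)) ^ (1-r) = Q₀ ^ (1-r) * ((q:ℝ) ^ (r-1) * K ^ (r-1)) := by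
      rw [div_eq_mul_inv, Real.mul_rpow (le_of_lt hQ₀0) (by positivity),
        Real.inv_rpow (by positivity), ← Real.rpow_neg (by positivity),
        show -(1-r) = r-1 by ring, Real.mul_rpow (le_of_lt hq0) (le_of_lt hK)]
    have e2 : (q:ℝ) ^ (-(2*r)) * (q:ℝ) ^ (r-1) = (q:ℝ) ^ (-(r+1)) := by
      rw [← Real.rpow_add hq0]; congr 1; ring
    have e3 : K ^ (-r) * K ^ (r-1) = K⁻¹ := by
      rw [← Real.rpow_add hK, show -r + (r-1) = -1 by ring, Real.rpow_neg_one]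
    calc (q:ℝ) ^ (-(2*r)) * (2 * (K ^ (-r) * ((Q₀ / ((q:ℝ) * K)) ^ (1-r) / (r-1))))
        = 2 / (r-1) * (((q:ℝ) ^ (-(2*r)) * (q:ℝ) ^ (r-1)) * (K ^ (-r) * K ^ (r-1)) * Q₀ ^ (1-r))
          := by rw [e1]; ring
      _ = 2 / (r-1) * (K⁻¹ * Q₀ ^ (1-r) * (q:ℝ) ^ (-(r+1))) := by rw [e2, e3]; ring
      _ ≤ 2 * r / (r-1) * (K⁻¹ * Q₀ ^ (1-r) * (q:ℝ) ^ (-(r+1))) := by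
          apply mul_le_mul_of_nonneg_right _ (by positivity)
          exact div_le_div₀ (by linarith) (by linarith) (by linarith) (le_refl _)
      _ = 2 * r / (r-1) * K⁻¹ * Q₀ ^ (1-r) * (q:ℝ) ^ (-(r+1)) := by ring
  · rw [if_neg hcase]
    refine (arcFn_integral_full hr hK hc).trans ?_
    have e4 : (q:ℝ) ^ (-(2*r)) = (q:ℝ) ^ (1-r) * (q:ℝ) ^ (-(r+1)) := by
      rw [← Real.rpow_add hq0]; congr 1; ring
    have e5 : (q:ℝ) ^ (1-r) ≤ Q₀ ^ (1-r) :=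
      Real.rpow_le_rpow_of_nonpos hQ₀0 (le_of_lt (not_le.mp hcase)) (by linarith)
    have e6 : 2 * r / (K * (r-1)) = 2 * r / (r-1) * K⁻¹ := by
      rw [div_eq_mul_inv, div_eq_mul_inv, mul_inv]; ring
    calc (q:ℝ) ^ (-(2*r)) * (2 * r / (K * (r-1)))
        = 2 * r / (r-1) * K⁻¹ * (q:ℝ) ^ (1-r) * (q:ℝ) ^ (-(r+1)) := by rw [e4, e6]; ring
      _ ≤ 2 * r / (r-1) * K⁻¹ * Q₀ ^ (1-r) * (q:ℝ) ^ (-(r+1)) := by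
          apply mul_le_mul_of_nonneg_right _ (Real.rpow_nonneg (le_of_lt hq0) _)
          apply mul_le_mul_of_nonneg_left e5
          have h5 : 0 < r - 1 := by linarith
          positivity

end Stmt2Aux

open Stmt2Aux in
/-- Lemma 6.1: `∫_{𝔐(Q₁)∖𝔐(Q₀)} Υ(α)^r dα ≪_r P^{-k} Q₀^{1-r}`, where `Υ(α) =
q^{-2}(1+P^k|α-a/q|)^{-1}` on the major arc `𝔐_{a,q}(½P^{k/2},P)` and `0` elsewhere on `[0,1)`. -/
theorem stmt2 (r : ℝ) (hr : 1 < r) :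
    ∃ C > 0, ∀ k : ℕ, 2 ≤ k → ∀ P Q₀ Q₁ : ℝ, 2 ≤ P → 1 ≤ Q₀ → Q₀ < Q₁ →
      Q₁ ≤ P ^ ((k : ℝ) / 2) →
      ∀ Υ : ℝ → ℝ,
        (∀ α : ℝ, ∀ a q : ℕ, Nat.Coprime a q → a ≤ q →
          (q : ℝ) ≤ (1 / 2) * P ^ ((k : ℝ) / 2) →
          0 ≤ α → α < 1 →
          |(q : ℝ) * α - a| ≤ ((1 / 2) * P ^ ((k : ℝ) / 2)) / P ^ k →
          Υ α = 1 / ((q : ℝ) ^ 2 * (1 + P ^ k * |α - a / q|))) →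
        (∀ α : ℝ, 0 ≤ α → α < 1 →
          (¬ ∃ a q : ℕ, Nat.Coprime a q ∧ a ≤ q ∧
            (q : ℝ) ≤ (1 / 2) * P ^ ((k : ℝ) / 2) ∧
            |(q : ℝ) * α - a| ≤ ((1 / 2) * P ^ ((k : ℝ) / 2)) / P ^ k) →
          Υ α = 0) →
        (∫ α in {α : ℝ |
            (0 ≤ α ∧ α < 1 ∧ ∃ a q : ℕ, Nat.Coprime a q ∧ a ≤ q ∧
              (q : ℝ) ≤ Q₁ ∧ |(q : ℝ) * α - a| ≤ Q₁ / P ^ k) ∧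
            ¬ ∃ a q : ℕ, Nat.Coprime a q ∧ a ≤ q ∧
              (q : ℝ) ≤ Q₀ ∧ |(q : ℝ) * α - a| ≤ Q₀ / P ^ k},
          Υ α ^ r) ≤ C * P ^ (-(k : ℝ)) * Q₀ ^ (1 - r) := by
  have hr0 : 0 < r - 1 := by linarith
  have hrpos : 0 < r := by linarith
  refine ⟨4 * r ^ 2 / (r - 1) ^ 2, by positivity, ?_⟩
  intro k hk P Q₀ Q₁ hP hQ₀ hQ01 hQ₁ Υ hΥ₁ hΥ₂
  have hP0 : (0:ℝ) < P := by linarith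
  set K : ℝ := P ^ k with hKdef
  have hK : 0 < K := by rw [hKdef]; positivity
  have hQ₀0 : (0:ℝ) < Q₀ := by linarith
  set S : Set ℝ := {α : ℝ |
      (0 ≤ α ∧ α < 1 ∧ ∃ a q : ℕ, Nat.Coprime a q ∧ a ≤ q ∧
        (q : ℝ) ≤ Q₁ ∧ |(q : ℝ) * α - a| ≤ Q₁ / K) ∧
      ¬ ∃ a q : ℕ, Nat.Coprime a q ∧ a ≤ q ∧
        (q : ℝ) ≤ Q₀ ∧ |(q : ℝ) * α - a| ≤ Q₀ / K} with hSdef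
  set N : ℕ := ⌊(1 / 2) * P ^ ((k:ℝ) / 2)⌋₊ with hNdef
  -- measurability of arc unions
  have harcs : ∀ Q : ℝ, MeasurableSet {α : ℝ | ∃ a q : ℕ, Nat.Coprime a q ∧ a ≤ q ∧
      (q : ℝ) ≤ Q ∧ |(q : ℝ) * α - a| ≤ Q / K} := by
    intro Q
    have heq : {α : ℝ | ∃ a q : ℕ, Nat.Coprime a q ∧ a ≤ q ∧
        (q : ℝ) ≤ Q ∧ |(q : ℝ) * α - a| ≤ Q / K}
        = ⋃ (a : ℕ) (q : ℕ), ({α : ℝ | Nat.Coprime a q} ∩ ({α : ℝ | a ≤ q} ∩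
            ({α : ℝ | (q : ℝ) ≤ Q} ∩ {α : ℝ | |(q : ℝ) * α - a| ≤ Q / K}))) := by
      ext α
      simp only [Set.mem_setOf_eq, Set.mem_iUnion, Set.mem_inter_iff]
    rw [heq]
    refine MeasurableSet.iUnion fun a => MeasurableSet.iUnion fun q => ?_
    have hm : Measurable fun α : ℝ => |(q : ℝ) * α - (a:ℝ)| :=
      ((measurable_id.const_mul _).sub measurable_const).abs
    exact (MeasurableSet.const _).inter ((MeasurableSet.const _).inter
      ((MeasurableSet.const _).inter (measurableSet_le hm measurable_const)))
  have hMS : MeasurableSet S := by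
    have hrw : S = (Set.Ici (0:ℝ) ∩ (Set.Iio (1:ℝ) ∩ {α : ℝ | ∃ a q : ℕ, Nat.Coprime a q ∧
          a ≤ q ∧ (q : ℝ) ≤ Q₁ ∧ |(q : ℝ) * α - a| ≤ Q₁ / K})) ∩
        {α : ℝ | ∃ a q : ℕ, Nat.Coprime a q ∧ a ≤ q ∧
          (q : ℝ) ≤ Q₀ ∧ |(q : ℝ) * α - a| ≤ Q₀ / K}ᶜ := rfl
    rw [hrw]
    exact (measurableSet_Ici.inter (measurableSet_Iio.inter (harcs Q₁))).inter (harcs Q₀).compl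
  -- nonnegativity of Υ on S
  have hΥnn : ∀ α ∈ S, 0 ≤ Υ α := by
    intro α hα
    rw [hSdef] at hα
    obtain ⟨⟨hα0, hα1, -⟩, -⟩ := hα
    by_cases hex : ∃ a q : ℕ, Nat.Coprime a q ∧ a ≤ q ∧
        (q : ℝ) ≤ (1 / 2) * P ^ ((k : ℝ) / 2) ∧
        |(q : ℝ) * α - a| ≤ ((1 / 2) * P ^ ((k : ℝ) / 2)) / K
    · obtain ⟨a, q, hcop, haq, hqW, harc⟩ := hex
      rw [hΥ₁ α a q hcop haq hqW hα0 hα1 harc]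
      positivity
    · rw [hΥ₂ α hα0 hα1 hex]
  have hind_nn : ∀ α : ℝ, 0 ≤ Set.indicator S (fun α => Υ α ^ r) α := fun α =>
    Set.indicator_nonneg (fun β hβ => Real.rpow_nonneg (hΥnn β hβ) r) α
  -- the pointwise claim
  have claim : ∀ α : ℝ, Set.indicator S (fun α => Υ α ^ r) α
      ≤ ∑ q ∈ Finset.Icc 1 N, ∑ a ∈ Finset.range (q+1),
          arcFn r K (if (q:ℝ) ≤ Q₀ then Q₀ / (q * K) else 0) ((q:ℝ) ^ (-(2*r))) (α - a / q) := by
    intro α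
    have hGnn : (0:ℝ) ≤ ∑ q ∈ Finset.Icc 1 N, ∑ a ∈ Finset.range (q+1),
        arcFn r K (if (q:ℝ) ≤ Q₀ then Q₀ / (q * K) else 0) ((q:ℝ) ^ (-(2*r))) (α - a / q) :=
      Finset.sum_nonneg fun q _ => Finset.sum_nonneg fun a _ =>
        arcFn_nonneg (le_of_lt hK) (Real.rpow_nonneg (Nat.cast_nonneg q) _) _
    by_cases hαS : α ∈ S
    · rw [Set.indicator_of_mem hαS]
      rw [hSdef] at hαS
      obtain ⟨⟨hα0, hα1, -⟩, hnot⟩ := hαS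
      by_cases hex : ∃ a q : ℕ, Nat.Coprime a q ∧ a ≤ q ∧
          (q : ℝ) ≤ (1 / 2) * P ^ ((k : ℝ) / 2) ∧
          |(q : ℝ) * α - a| ≤ ((1 / 2) * P ^ ((k : ℝ) / 2)) / K
      · obtain ⟨a, q, hcop, haq, hqW, harc⟩ := hex
        have hq1 : 1 ≤ q := by
          rcases Nat.eq_zero_or_pos q with h0 | h1
          · exfalso
            subst h0
            have ha0 : a = 0 := Nat.le_zero.mp haq
            subst ha0
            simp [Nat.Coprime] at hcop
          · exact h1
        have hq0 : (0:ℝ) < q := by exact_mod_cast hq1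
        have hΥeq := hΥ₁ α a q hcop haq hqW hα0 hα1 harc
        have hX : 0 < 1 + K * |α - (a:ℝ)/q| := by positivity
        have hmem : (if (q:ℝ) ≤ Q₀ then Q₀ / (q * K) else 0) ≤ |α - (a:ℝ)/q| := by
          by_cases hcase : (q:ℝ) ≤ Q₀
          · rw [if_pos hcase]
            push_neg at hnot
            have hgt := hnot a q hcop haq hcase
            have hfact : (q:ℝ) * α - a = (q:ℝ) * (α - a/q) := by
              field_simp
            rw [hfact, abs_mul, abs_of_pos hq0] at hgt
            have h1 : Q₀ < ((q:ℝ) * |α - (a:ℝ)/q|) * K := (div_lt_iff₀ hK).mp hgt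
            have h2 : Q₀ < |α - (a:ℝ)/q| * ((q:ℝ) * K) := lt_of_lt_of_eq h1 (by ring)
            exact le_of_lt ((div_lt_iff₀ (by positivity)).mpr h2)
          · rw [if_neg hcase]
            exact abs_nonneg _
        have hval : Υ α ^ r = (q:ℝ) ^ (-(2*r)) * (1 + K * |α - (a:ℝ)/q|) ^ (-r) := by
          rw [hΥeq, one_div, ← Real.rpow_natCast (q:ℝ) 2,
            Real.inv_rpow (by positivity), ← Real.rpow_neg (by positivity),
            Real.mul_rpow (Real.rpow_nonneg (le_of_lt hq0) _) (le_of_lt hX),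
            ← Real.rpow_mul (le_of_lt hq0)]
          norm_num
        have hαval : Υ α ^ r
            = arcFn r K (if (q:ℝ) ≤ Q₀ then Q₀ / (q * K) else 0) ((q:ℝ) ^ (-(2*r)))
              (α - (a:ℝ)/q) := by
          rw [hval, arcFn_apply_of_mem hmem]
        rw [hαval]
        have hstep1 : arcFn r K (if (q:ℝ) ≤ Q₀ then Q₀ / (q * K) else 0) ((q:ℝ) ^ (-(2*r)))
            (α - (a:ℝ)/q)
            ≤ ∑ a' ∈ Finset.range (q+1),
              arcFn r K (if (q:ℝ) ≤ Q₀ then Q₀ / (q * K) else 0) ((q:ℝ) ^ (-(2*r)))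
                (α - (a':ℕ)/q) :=
          Finset.single_le_sum
            (f := fun a' : ℕ => arcFn r K (if (q:ℝ) ≤ Q₀ then Q₀ / (q * K) else 0)
              ((q:ℝ) ^ (-(2*r))) (α - (a':ℕ)/q))
            (fun i _ => arcFn_nonneg (le_of_lt hK) (Real.rpow_nonneg (Nat.cast_nonneg q) _) _)
            (Finset.mem_range.mpr (by omega))
        refine hstep1.trans (Finset.single_le_sum
          (f := fun q' : ℕ => ∑ a' ∈ Finset.range (q'+1),
            arcFn r K (if (q':ℝ) ≤ Q₀ then Q₀ / (q' * K) else 0) ((q':ℝ) ^ (-(2*r)))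
              (α - (a':ℕ)/q'))
          (fun i _ => Finset.sum_nonneg fun a' _ =>
            arcFn_nonneg (le_of_lt hK) (Real.rpow_nonneg (Nat.cast_nonneg i) _) _)
          (Finset.mem_Icc.mpr ⟨hq1, Nat.le_floor hqW⟩))
      · rw [hΥ₂ α hα0 hα1 hex, Real.zero_rpow (by linarith : r ≠ 0)]
        exact hGnn
    · rw [Set.indicator_of_notMem hαS]
      exact hGnn
  -- integrability
  have hterm_int : ∀ q a : ℕ, Integrable (fun α : ℝ =>
      arcFn r K (if (q:ℝ) ≤ Q₀ then Q₀ / (q * K) else 0) ((q:ℝ) ^ (-(2*r))) (α - a / q)) :=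
    fun q a => (arcFn_integrable hr hK).comp_sub_right _
  have hGint : Integrable (fun α : ℝ => ∑ q ∈ Finset.Icc 1 N, ∑ a ∈ Finset.range (q+1),
      arcFn r K (if (q:ℝ) ≤ Q₀ then Q₀ / (q * K) else 0) ((q:ℝ) ^ (-(2*r))) (α - a / q)) :=
    integrable_finset_sum _ fun q _ => integrable_finset_sum _ fun a _ => hterm_int q a
  -- per-q bound
  have hsum3 : ∀ q ∈ Finset.Icc 1 N, (∑ a ∈ Finset.range (q+1), ∫ α : ℝ,
      arcFn r K (if (q:ℝ) ≤ Q₀ then Q₀ / (q * K) else 0) ((q:ℝ) ^ (-(2*r))) (α - a / q))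
      ≤ (4*r/(r-1) * K⁻¹ * Q₀^(1-r)) * (q:ℝ)^(-r) := by
    intro q hq
    obtain ⟨hq1, -⟩ := Finset.mem_Icc.mp hq
    have hq0 : (0:ℝ) < q := by exact_mod_cast hq1
    have hDnn : (0:ℝ) ≤ 2*r/(r-1) * K⁻¹ * Q₀^(1-r) * (q:ℝ)^(-(r+1)) :=
      mul_nonneg (mul_nonneg (mul_nonneg (div_nonneg (by linarith) (by linarith))
        (inv_nonneg.mpr (le_of_lt hK))) (Real.rpow_nonneg (le_of_lt hQ₀0) _))
        (Real.rpow_nonneg (le_of_lt hq0) _)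
    have hbq : ∀ a : ℕ, (∫ α : ℝ,
        arcFn r K (if (q:ℝ) ≤ Q₀ then Q₀ / (q * K) else 0) ((q:ℝ) ^ (-(2*r))) (α - a / q))
        ≤ 2*r/(r-1) * K⁻¹ * Q₀^(1-r) * (q:ℝ)^(-(r+1)) := by
      intro a
      rw [integral_sub_right_eq_self
        (arcFn r K (if (q:ℝ) ≤ Q₀ then Q₀ / (q * K) else 0) ((q:ℝ) ^ (-(2*r)))) ((a:ℝ) / q)]
      exact arc_bound hr hK hQ₀ hq1
    calc (∑ a ∈ Finset.range (q+1), ∫ α : ℝ,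
        arcFn r K (if (q:ℝ) ≤ Q₀ then Q₀ / (q * K) else 0) ((q:ℝ) ^ (-(2*r))) (α - a / q))
        ≤ ∑ _a ∈ Finset.range (q+1), 2*r/(r-1) * K⁻¹ * Q₀^(1-r) * (q:ℝ)^(-(r+1)) :=
          Finset.sum_le_sum fun a _ => hbq a
      _ = ((q+1 : ℕ):ℝ) * (2*r/(r-1) * K⁻¹ * Q₀^(1-r) * (q:ℝ)^(-(r+1))) := by
          rw [Finset.sum_const, Finset.card_range, nsmul_eq_mul]
      _ ≤ (2*(q:ℝ)) * (2*r/(r-1) * K⁻¹ * Q₀^(1-r) * (q:ℝ)^(-(r+1))) := by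
          apply mul_le_mul_of_nonneg_right _ hDnn
          have hq1' : (1:ℝ) ≤ q := by exact_mod_cast hq1
          push_cast
          linarith [hq1']
      _ = (4*r/(r-1) * K⁻¹ * Q₀^(1-r)) * ((q:ℝ) * (q:ℝ)^(-(r+1))) := by ring
      _ = (4*r/(r-1) * K⁻¹ * Q₀^(1-r)) * (q:ℝ)^(-r) := by
          congr 1
          have h := Real.rpow_add hq0 1 (-(r+1))
          rw [Real.rpow_one] at h
          rw [← h, show (1:ℝ) + -(r+1) = -r by ring]
  have hKinv : P ^ (-(k:ℝ)) = K⁻¹ := by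
    rw [Real.rpow_neg (le_of_lt hP0), Real.rpow_natCast]
  -- assemble
  calc ∫ α in S, Υ α ^ r
      = ∫ α : ℝ, Set.indicator S (fun α => Υ α ^ r) α := (integral_indicator hMS).symm
    _ ≤ ∫ α : ℝ, ∑ q ∈ Finset.Icc 1 N, ∑ a ∈ Finset.range (q+1),
          arcFn r K (if (q:ℝ) ≤ Q₀ then Q₀ / (q * K) else 0) ((q:ℝ) ^ (-(2*r))) (α - a / q) :=
        integral_mono_of_nonneg (ae_of_all _ hind_nn) hGint (ae_of_all _ claim)
    _ = ∑ q ∈ Finset.Icc 1 N, ∫ α : ℝ, ∑ a ∈ Finset.range (q+1),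
          arcFn r K (if (q:ℝ) ≤ Q₀ then Q₀ / (q * K) else 0) ((q:ℝ) ^ (-(2*r))) (α - a / q) :=
        integral_finset_sum _ fun q _ => integrable_finset_sum _ fun a _ => hterm_int q a
    _ = ∑ q ∈ Finset.Icc 1 N, ∑ a ∈ Finset.range (q+1), ∫ α : ℝ,
          arcFn r K (if (q:ℝ) ≤ Q₀ then Q₀ / (q * K) else 0) ((q:ℝ) ^ (-(2*r))) (α - a / q) :=
        Finset.sum_congr rfl fun q _ => integral_finset_sum _ fun a _ => hterm_int q a
    _ ≤ ∑ q ∈ Finset.Icc 1 N, (4*r/(r-1) * K⁻¹ * Q₀^(1-r)) * (q:ℝ)^(-r) :=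
        Finset.sum_le_sum hsum3
    _ = (4*r/(r-1) * K⁻¹ * Q₀^(1-r)) * ∑ q ∈ Finset.Icc 1 N, (q:ℝ)^(-r) := by
        rw [Finset.mul_sum]
    _ ≤ (4*r/(r-1) * K⁻¹ * Q₀^(1-r)) * (r/(r-1)) := by
        apply mul_le_mul_of_nonneg_left (sum_rpow hr N)
        exact mul_nonneg (mul_nonneg (div_nonneg (by linarith) (by linarith))
          (inv_nonneg.mpr (le_of_lt hK))) (Real.rpow_nonneg (le_of_lt hQ₀0) _)
    _ = 4 * r ^ 2 / (r - 1) ^ 2 * K⁻¹ * Q₀ ^ (1 - r) := by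
        field_simp
    _ = 4 * r ^ 2 / (r - 1) ^ 2 * P ^ (-(k:ℝ)) * Q₀ ^ (1 - r) := by rw [hKinv]
end
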